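/- Foata's transformation Φ is a bijection from S_n to itself satisfying maj(σ) = inv(Φ(σ)) for all σ ∈ S_n. -/

import Mathlib

/-!
Write `Φ(r x) = γ_x(Φ r) x` and let `y` be the last letter of `r`, which is also that of `Φ r`.
The operation `γ_x` cuts `Φ r` after every letter lying on the same side of `x` as `y` and moves
the last letter `c` of each block `A c` to its front. All letters of `A` lie on the other side
of `x`, so the rotation removes one inversion for each letter of `A` above `x` and creates one for
each letter of `A` at most `x`. If `y ≤ x`, the moved-over letters are exactly the letters above
`x`, and appending `x` restores the lost inversions: `inv` is unchanged, as is `maj`. If `y > x`,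
the rotations create one inversion per letter `≤ x` and appending `x` one per letter `> x`, so
`inv` grows by `|r|`, which is the new descent of `r x`.

`γ_x` is injective because the first letter of its output lies on the side of `y` (this recovers
the cutting rule), after which the blocks can be read off; as `Φ` keeps the last letter, it is
injective by induction, hence bijective on the finite set `S_n`.
-/

def gammaGo (p : ℤ → Bool) : List ℤ → List ℤ → List ℤ
  | acc, [] => acc.reverse
  | acc, c :: d =>
      if p c then c :: (acc.reverse ++ gammaGo p [] d) else gammaGo p (c :: acc) d

/-- Foata's operation `γ_x`. -/
def gammaF (x : ℤ) (r : List ℤ) : List ℤ :=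
  match r.getLast? with
  | none => []
  | some y =>
      if y ≤ x then gammaGo (fun z => decide (z ≤ x)) [] r
      else gammaGo (fun z => decide (x < z)) [] r

/-- Foata's second fundamental transformation: `Φ(r x) = γ_x(Φ(r)) x`. -/
def foataF (r : List ℤ) : List ℤ :=
  r.foldl (fun st y => gammaF y st ++ [y]) []

/-- The set of words representing elements of `S_n`: rearrangements of `1 2 ⋯ n`. -/
def permWordsW (n : ℕ) : Set (List ℤ) :=
  {l | l.Perm ((List.range n).map fun i => (i : ℤ) + 1)}

/-- The inversion number of a word. -/
def invW (l : List ℤ) : ℕ :=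
  ((Finset.range l.length ×ˢ Finset.range l.length).filter fun p =>
    p.1 < p.2 ∧ l.getD p.2 0 < l.getD p.1 0).card

/-- The major index of a word (sum of 1-indexed descent positions). -/
def majW (l : List ℤ) : ℕ :=
  ∑ i ∈ Finset.range (l.length - 1), if l.getD (i + 1) 0 < l.getD i 0 then i + 1 else 0

lemma countP_eq_sum_range_getD (q : ℤ → Bool) (l : List ℤ) :
    l.countP q = ∑ j ∈ Finset.range l.length, if q (l.getD j 0) then 1 else 0 := by
  induction l with
  | nil => simp
  | cons a l ih =>
    rw [List.countP_cons, ih, List.length_cons, Finset.sum_range_succ']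
    simp [add_comm]

lemma invW_cons (a : ℤ) (l : List ℤ) :
    invW (a :: l) = l.countP (fun b => decide (b < a)) + invW l := by
  unfold invW
  rw [Finset.card_filter, Finset.card_filter, Finset.sum_product, Finset.sum_product,
    List.length_cons, Finset.sum_range_succ', Finset.sum_range_succ']
  simp only [List.getD_cons_succ, List.getD_cons_zero, Nat.add_lt_add_iff_right,
    Finset.sum_range_succ' _ l.length, Nat.not_lt_zero, false_and, if_false, add_zero]
  simp [countP_eq_sum_range_getD, add_comm]

lemma invW_append_singleton (W : List ℤ) (x : ℤ) :
    invW (W ++ [x]) = invW W + W.countP (fun a => decide (x < a)) := by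
  induction W with
  | nil => simp [invW_cons]
  | cons a W ih =>
    simp only [List.cons_append, invW_cons, ih, List.countP_append, List.countP_cons]
    split_ifs <;> simp_all <;> omega

lemma invW_cons_append_add_countP (c : ℤ) (A R : List ℤ) :
    invW (c :: (A ++ R)) + A.countP (fun a => decide (c < a))
      = invW (A ++ c :: R) + A.countP (fun a => decide (a < c)) := by
  induction A with
  | nil => simp
  | cons a A ih =>
    simp only [List.cons_append, invW_cons, List.countP_append, List.countP_cons] at ih ⊢
    split_ifs <;> simp_all <;> omega

lemma invW_append_add_of_perm (X : List ℤ) {R R' : List ℤ} (h : R.Perm R') :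
    invW (X ++ R) + invW R' = invW (X ++ R') + invW R := by
  induction X with
  | nil => simp [add_comm]
  | cons a X ih =>
    simp only [List.cons_append, invW_cons, List.countP_append, h.countP_eq]
    omega

lemma majW_append_singleton {l : List ℤ} {y : ℤ} (hy : l.getLast? = some y) (x : ℤ) :
    majW (l ++ [x]) = majW l + if x < y then l.length else 0 := by
  obtain ⟨k, hk⟩ : ∃ k, l.length = k + 1 :=
    Nat.exists_eq_succ_of_ne_zero
      (by simp [List.length_eq_zero_iff, ← List.getLast?_eq_none_iff, hy])
  have hlast : l.getD k 0 = y := by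
    rw [List.getLast?_eq_getElem?, hk, Nat.add_sub_cancel] at hy
    simp [hy]
  unfold majW
  rw [List.length_append, List.length_singleton, hk, Nat.add_sub_cancel, Nat.add_sub_cancel,
    Finset.sum_range_succ]
  congr 1
  · refine Finset.sum_congr rfl fun i hi => ?_
    rw [Finset.mem_range] at hi
    rw [List.getD_append _ _ _ _ (by omega), List.getD_append _ _ _ _ (by omega)]
  · rw [List.getD_append _ _ _ k (by omega), List.getD_append_right _ _ _ (k + 1) (by omega), hk,
      hlast]
    simp

/- On a word ending in a `p`-letter, `gammaGo p []` cuts after each `p`-letter and moves the last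
letter of every block to its front; `γ_x` is the case where `p` is `sameSide x y` below. -/
def EndsIn (p : ℤ → Bool) (l : List ℤ) : Prop := ∀ y ∈ l.getLast?, p y = true

namespace EndsIn

variable {p : ℤ → Bool}

lemma nil : EndsIn p [] := by simp [EndsIn]

lemma of_append {A d : List ℤ} (h : EndsIn p (A ++ d)) : EndsIn p d := by
  intro y hy
  exact h y (by simp [List.getLast?_append, Option.mem_def.mp hy])

lemma eq_nil_of_forall_false {A : List ℤ} (h : EndsIn p A) (hA : ∀ a ∈ A, p a = false) :
    A = [] := by
  by_contra hne
  have hlast := h _ (List.getLast?_eq_some_getLast hne)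
  simp [hA _ (List.getLast_mem hne)] at hlast

lemma append_cons (A : List ℤ) {c : ℤ} (hc : p c = true) {d : List ℤ} (hd : EndsIn p d) :
    EndsIn p (A ++ c :: d) := by
  intro y hy
  rcases hd' : d.getLast? with _ | z
  · simp_all [List.getLast?_append, List.getLast?_cons]
  · simp only [List.getLast?_append, List.getLast?_cons, hd'] at hy
    simpa [← Option.some_inj.mp hy] using hd z hd'

@[elab_as_elim]
theorem induction_on {motive : (l : List ℤ) → EndsIn p l → Prop} {l : List ℤ}
    (hl : EndsIn p l)
    (nil : motive [] EndsIn.nil)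
    (block : ∀ A c d (_ : ∀ a ∈ A, p a = false) (hc : p c = true) (hd : EndsIn p d),
      motive d hd → motive (A ++ c :: d) (hd.append_cons A hc)) : motive l hl := by
  suffices ∀ A, (∀ a ∈ A, p a = false) → ∀ h : EndsIn p (A ++ l), motive (A ++ l) h by
    simpa using this [] (by simp) hl
  clear hl
  induction l with
  | nil =>
    intro A hA h
    obtain rfl := (List.append_nil A ▸ h).eq_nil_of_forall_false hA
    exact nil
  | cons c d ih =>
    intro A hA h
    have hd : EndsIn p d := of_append (A := A ++ [c]) (by simpa using h)
    cases hc : p c with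
    | true => exact block A c d hA hc hd (ih [] (by simp) hd)
    | false =>
      have hAc : ∀ a ∈ A ++ [c], p a = false := by
        simpa [or_imp, forall_and] using ⟨hA, hc⟩
      simpa using ih (A ++ [c]) hAc (by simpa using h)

end EndsIn

section gammaGo

variable {p : ℤ → Bool}

lemma gammaGo_append_cons {A : List ℤ} (hA : ∀ a ∈ A, p a = false) {c : ℤ} (hc : p c = true)
    (acc d : List ℤ) :
    gammaGo p acc (A ++ c :: d) = c :: (acc.reverse ++ A ++ gammaGo p [] d) := by
  induction A generalizing acc with
  | nil => simp [gammaGo, hc]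
  | cons a A ih =>
    rw [List.forall_mem_cons] at hA
    simp [gammaGo, hA.1, ih hA.2]

lemma gammaGo_perm {l : List ℤ} (hl : EndsIn p l) : (gammaGo p [] l).Perm l := by
  induction hl using EndsIn.induction_on with
  | nil => simp [gammaGo]
  | block A c d hA hc _ ih =>
    rw [gammaGo_append_cons hA hc]
    simpa using ((ih.append_left A).cons c).trans List.perm_middle.symm

lemma head?_gammaGo {l : List ℤ} (hl : EndsIn p l) :
    ∀ z ∈ (gammaGo p [] l).head?, p z = true := by
  induction hl using EndsIn.induction_on with
  | nil => simp [gammaGo]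
  | block A c d hA hc => simp [gammaGo_append_cons hA hc, hc]

lemma takeWhile_append_gammaGo {A : List ℤ} (hA : ∀ a ∈ A, p a = false) {d : List ℤ}
    (hd : EndsIn p d) : (A ++ gammaGo p [] d).takeWhile (fun z => !p z) = A := by
  rw [List.takeWhile_append_of_pos (by simpa using hA)]
  have hhead := head?_gammaGo hd
  rcases hG : gammaGo p [] d with _ | ⟨z, t⟩
  · simp
  · simp [hhead z (by simp [hG])]

lemma eq_of_gammaGo_eq {l l' : List ℤ} (hl : EndsIn p l) (hl' : EndsIn p l')
    (h : gammaGo p [] l = gammaGo p [] l') : l = l' := by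
  induction hl using EndsIn.induction_on generalizing l' with
  | nil =>
    have h' := gammaGo_perm hl'
    rw [← h] at h'
    simpa [gammaGo, eq_comm] using h'
  | block A c d hA hc hd ih =>
    induction hl' using EndsIn.induction_on with
    | nil => simp [gammaGo_append_cons hA hc, gammaGo] at h
    | block A' c' d' hA' hc' hd' _ =>
      simp only [gammaGo_append_cons hA hc, gammaGo_append_cons hA' hc', List.reverse_nil,
        List.nil_append, List.cons.injEq] at h
      obtain ⟨rfl, h⟩ := h
      obtain rfl : A = A' := by
        rw [← takeWhile_append_gammaGo hA hd, h, takeWhile_append_gammaGo hA' hd']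
      rw [ih hd' (List.append_cancel_left h)]

end gammaGo

lemma invW_gammaGo_add_countP {p : ℤ → Bool} (x : ℤ)
    (hsep : ∀ a c, p a = false → p c = true → (a ≤ x ↔ x < c)) {l : List ℤ}
    (hl : EndsIn p l) :
    invW (gammaGo p [] l) + l.countP (fun a => !p a && decide (x < a))
      = invW l + l.countP (fun a => !p a && decide (a ≤ x)) := by
  induction hl using EndsIn.induction_on with
  | nil => simp [gammaGo]
  | block A c d hA hc hd ih =>
    have hrot := invW_cons_append_add_countP c A (gammaGo p [] d)
    have hperm := invW_append_add_of_perm A ((gammaGo_perm hd).cons c)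
    have habove :
        A.countP (fun a => decide (c < a)) = A.countP (fun a => !p a && decide (x < a)) :=
      List.countP_congr fun a ha => by
        have := hsep a c (hA a ha) hc
        simp only [hA a ha, Bool.not_false, Bool.true_and, decide_eq_true_eq]
        omega
    have hbelow :
        A.countP (fun a => decide (a < c)) = A.countP (fun a => !p a && decide (a ≤ x)) :=
      List.countP_congr fun a ha => by
        have := hsep a c (hA a ha) hc
        simp only [hA a ha, Bool.not_false, Bool.true_and, decide_eq_true_eq]
        omega
    rw [gammaGo_append_cons hA hc, List.reverse_nil, List.nil_append]
    simp only [invW_cons, (gammaGo_perm hd).countP_eq] at hperm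
    simp only [List.countP_append, List.countP_cons, hc, Bool.not_true, Bool.false_and,
      Bool.false_eq_true, if_false]
    omega

def sameSide (x y : ℤ) : ℤ → Bool := fun z => decide (z ≤ x ↔ y ≤ x)

section gammaF

variable {x y : ℤ} {r : List ℤ}

lemma endsIn_sameSide (hy : r.getLast? = some y) : EndsIn (sameSide x y) r := by
  simp [EndsIn, hy, sameSide]

lemma sameSide_eq_sameSide {c : ℤ} (hc : sameSide x y c = true) :
    sameSide x y = sameSide x c := by
  funext z
  simp only [sameSide, decide_eq_true_eq] at hc ⊢
  simp only [hc]

lemma le_iff_lt_of_sameSide {a c : ℤ} (ha : sameSide x y a = false) (hc : sameSide x y c = true) :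
    a ≤ x ↔ x < c := by
  simp only [sameSide, decide_eq_false_iff_not, decide_eq_true_eq] at ha hc
  omega

lemma gammaF_eq_gammaGo (hy : r.getLast? = some y) : gammaF x r = gammaGo (sameSide x y) [] r := by
  unfold gammaF
  rw [hy]
  dsimp only
  split_ifs with hyx <;> congr 1 <;> funext z <;> simp [sameSide, hyx]

lemma gammaF_perm (x : ℤ) (r : List ℤ) : (gammaF x r).Perm r := by
  rcases hy : r.getLast? with _ | y
  · simp_all [gammaF]
  · rw [gammaF_eq_gammaGo hy]
    exact gammaGo_perm (endsIn_sameSide hy)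

lemma gammaF_injective (x : ℤ) : Function.Injective (gammaF x) := by
  intro a b h
  have hlen : a.length = b.length :=
    (gammaF_perm x a).length_eq.symm.trans (h ▸ (gammaF_perm x b).length_eq)
  rcases eq_or_ne a [] with rfl | ha
  · exact (List.eq_nil_of_length_eq_zero hlen.symm).symm
  have hb : b ≠ [] := by simpa [← List.length_eq_zero_iff, ← hlen] using ha
  have hya := List.getLast?_eq_some_getLast ha
  have hyb := List.getLast?_eq_some_getLast hb
  obtain ⟨c, hc⟩ : ∃ c, (gammaF x a).head? = some c := by
    simpa [← Option.ne_none_iff_exists', ← List.length_eq_zero_iff,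
      (gammaF_perm x a).length_eq] using ha
  have hca := head?_gammaGo (endsIn_sameSide hya) c (gammaF_eq_gammaGo hya ▸ hc)
  have hcb := head?_gammaGo (endsIn_sameSide hyb) c (gammaF_eq_gammaGo hyb ▸ h ▸ hc)
  rw [gammaF_eq_gammaGo hya, gammaF_eq_gammaGo hyb, sameSide_eq_sameSide hca,
    sameSide_eq_sameSide hcb] at h
  exact eq_of_gammaGo_eq (sameSide_eq_sameSide hca ▸ endsIn_sameSide hya)
    (sameSide_eq_sameSide hcb ▸ endsIn_sameSide hyb) h

lemma invW_gammaF_append_singleton (hy : r.getLast? = some y) (x : ℤ) :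
    invW (gammaF x r ++ [x]) = invW r + if x < y then r.length else 0 := by
  have key := invW_gammaGo_add_countP (p := sameSide x y) x (fun _ _ => le_iff_lt_of_sameSide)
    (endsIn_sameSide hy)
  rw [invW_append_singleton, (gammaF_perm x r).countP_eq, gammaF_eq_gammaGo hy]
  have hsplit := r.length_eq_countP_add_countP (fun a => decide (x < a))
  split_ifs with hxy
  · have hlarge : r.countP (fun a => !sameSide x y a && decide (x < a)) = 0 :=
      List.countP_eq_zero.mpr fun a _ => by simp [sameSide]; omega
    have hsmall : r.countP (fun a => !sameSide x y a && decide (a ≤ x))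
        = r.countP (fun a => decide ¬decide (x < a) = true) :=
      List.countP_congr fun a _ => by simp [sameSide]; omega
    omega
  · have hlarge : r.countP (fun a => !sameSide x y a && decide (x < a))
        = r.countP (fun a => decide (x < a)) :=
      List.countP_congr fun a _ => by simp [sameSide]; omega
    have hsmall : r.countP (fun a => !sameSide x y a && decide (a ≤ x)) = 0 :=
      List.countP_eq_zero.mpr fun a _ => by simp [sameSide]; omega
    omega

end gammaF

lemma foataF_append_singleton (l : List ℤ) (x : ℤ) :
    foataF (l ++ [x]) = gammaF x (foataF l) ++ [x] := by
  simp [foataF, List.foldl_append]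

lemma foataF_perm (l : List ℤ) : (foataF l).Perm l := by
  induction l using List.reverseRecOn with
  | nil => rfl
  | append_singleton l x ih =>
    rw [foataF_append_singleton]
    exact ((gammaF_perm x _).trans ih).append_right [x]

lemma foataF_length (l : List ℤ) : (foataF l).length = l.length := (foataF_perm l).length_eq

lemma foataF_getLast? (l : List ℤ) : (foataF l).getLast? = l.getLast? := by
  induction l using List.reverseRecOn with
  | nil => rfl
  | append_singleton l x _ => simp [foataF_append_singleton]

lemma foataF_injective : Function.Injective foataF := by
  intro a b h
  induction a using List.reverseRecOn generalizing b with
  | nil => simpa [foataF_length, eq_comm] using congrArg List.length h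
  | append_singleton a x ih =>
    induction b using List.reverseRecOn with
    | nil => simpa [foataF_length] using congrArg List.length h
    | append_singleton b y _ =>
      rw [foataF_append_singleton, foataF_append_singleton] at h
      obtain ⟨h, hxy⟩ := List.append_inj' h rfl
      obtain rfl := List.singleton_inj.mp hxy
      rw [ih (gammaF_injective x h)]

lemma majW_eq_invW_foataF (l : List ℤ) : majW l = invW (foataF l) := by
  induction l using List.reverseRecOn with
  | nil => rfl
  | append_singleton l x ih =>
    rcases hy : l.getLast? with _ | y
    · rw [List.getLast?_eq_none_iff] at hy
      subst hy
      show majW [x] = invW [x]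
      rw [invW_cons]
      rfl
    have hW : (foataF l).getLast? = some y := by rw [foataF_getLast?, hy]
    rw [majW_append_singleton hy, foataF_append_singleton, invW_gammaF_append_singleton hW, ih,
      foataF_length]

lemma permWordsW_finite (n : ℕ) : (permWordsW n).Finite := by
  refine (((List.range n).map fun i => (i : ℤ) + 1).permutations.toFinset.finite_toSet).subset ?_
  intro l hl
  rwa [Finset.mem_coe, List.mem_toFinset, List.mem_permutations]

/-- Foata's `Φ` is a bijection of `S_n` onto itself with `maj σ = inv (Φ σ)`. -/
theorem stmt14 (n : ℕ) :
    Set.BijOn foataF (permWordsW n) (permWordsW n) ∧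
    ∀ l ∈ permWordsW n, majW l = invW (foataF l) := by
  have hmaps : Set.MapsTo foataF (permWordsW n) (permWordsW n) :=
    fun l hl => (foataF_perm l).trans hl
  exact ⟨((permWordsW_finite n).injOn_iff_bijOn_of_mapsTo hmaps).mp foataF_injective.injOn,
    fun l _ => majW_eq_invW_foataF l⟩
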